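/- arXiv:2601.16139 — 2 statements merged into one kernel-verified Lean document; each statement's English description precedes it below -/
import Mathlib

section
/- Let x_1 ∈ Ω maximize K(x,x) over Ω and, inductively, let x_{k+1} ∈ Ω maximize S_k(x) = K(x,x) − v_k(x)ᵀ G_k⁻¹ v_k(x) over x ∈ Ω, where G_k = [K(x_i,x_j)]_{i,j=1}^k and v_k(x) = (K(x_1,x),…,K(x_k,x))ᵀ; assume each G_k (k = 1,…,n) is invertible. Then det((1/n) G_n) ≥ Π_{k=1}^n (w_K(k−1)² / (e·k)); equivalently, the product of all n eigenvalues of the empirical kernel matrix (1/n)[K(x_i,x_j)]_{i,j=1}^n (i.e. of the integral operator associated with the empirical measure (1/n)Σ_{i=1}^n δ_{x_i}) is at least Π_{k=1}^n w_K(k−1)²/(e·k), where w_K(0) = sup_{x∈Ω} √(K(x,x)). -/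
/-!
For invertible `G_k`, `S_k(y)` is the squared distance from `Φ y` to
`V_k = span {Φ x_1, …, Φ x_k}`, and the Schur complement of `G_k` in `G_{k+1}` is
`S_k(x_{k+1})`, so `det G_n = ∏_{k<n} S_k(x_{k+1})`. Since `x_{k+1}` maximizes `S_k`,
the subspace `V_k` approximates all of `Φ(Ω)` within `√S_k(x_{k+1})`, hence
`w_K(k)² ≤ S_k(x_{k+1})`. Finally `n^n ≤ eⁿ n!` absorbs the scaling `(1/n)ⁿ`.
-/

open MeasureTheory Filter
open scoped ENNReal

noncomputable section

/-- The Kolmogorov `n`-width of the image of `Ω` under `Φ` in the Hilbert space `H`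
(so `kolmWidth Ω Φ 0 = sup_{x ∈ Ω} ‖Φ x‖`). -/
def kolmWidth {E H : Type*} [NormedAddCommGroup H] [InnerProductSpace ℝ H]
    (Ω : Set E) (Φ : E → H) (n : ℕ) : ℝ :=
  ⨅ L : {L : Submodule ℝ H // ∃ s : Finset H, s.card ≤ n ∧ L = Submodule.span ℝ (s : Set H)},
    ⨆ x : Ω, Metric.infDist (Φ (x : E)) (L.1 : Set H)

/-- The Gram matrix `[K(x_i,x_j)]` of the points `x : Fin n → E`, where
`K(x,y) = ⟪Φ x, Φ y⟫`. -/
def gramM {E H : Type*} [NormedAddCommGroup H] [InnerProductSpace ℝ H]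
    (Φ : E → H) {n : ℕ} (x : Fin n → E) : Matrix (Fin n) (Fin n) ℝ :=
  Matrix.of fun i j => (inner ℝ (Φ (x i)) (Φ (x j)) : ℝ)

/-- The vector `v(y) = (K(x_1,y), …, K(x_n,y))`. -/
def kvec {E H : Type*} [NormedAddCommGroup H] [InnerProductSpace ℝ H]
    (Φ : E → H) {n : ℕ} (x : Fin n → E) (y : E) : Fin n → ℝ :=
  fun i => (inner ℝ (Φ (x i)) (Φ y) : ℝ)

/-- `S_k(y) = K(y,y) − v(y)ᵀ G_k⁻¹ v(y)`; for `k = 0` this is `K(y,y)`. -/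
def Sfun {E H : Type*} [NormedAddCommGroup H] [InnerProductSpace ℝ H]
    (Φ : E → H) {n : ℕ} (x : Fin n → E) (y : E) : ℝ :=
  (inner ℝ (Φ y) (Φ y) : ℝ) -
    dotProduct (kvec Φ x y) (Matrix.mulVec (gramM Φ x)⁻¹ (kvec Φ x y))

open scoped Matrix

section

variable {E H : Type*} [NormedAddCommGroup H] [InnerProductSpace ℝ H]

theorem Submodule.infDist_eq_norm_sub_of_forall_inner_eq_zero (K : Submodule ℝ H) {u p : H}
    (hp : p ∈ K) (horth : ∀ w ∈ K, inner ℝ (u - p) w = (0 : ℝ)) :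
    Metric.infDist u (K : Set H) = ‖u - p‖ := by
  simpa only [Metric.infDist_eq_iInf, dist_eq_norm] using
    ((K.norm_eq_iInf_iff_real_inner_eq_zero hp).2 horth).symm

section GramProjection

variable (Φ : E → H) {k : ℕ} (x : Fin k → E) (y : E)

/-- The coefficients solve the normal equations `G c = v(y)`, so for invertible `G` this is the
orthogonal projection of `Φ y` onto the span of the `Φ (x i)`. -/
def gramProj : H :=
  ∑ i, ((gramM Φ x)⁻¹ *ᵥ kvec Φ x y) i • Φ (x i)

theorem gramProj_mem_span :
    gramProj Φ x y ∈ Submodule.span ℝ (Set.range fun i => Φ (x i)) :=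
  Submodule.sum_mem _ fun i _ => Submodule.smul_mem _ _ (Submodule.subset_span ⟨i, rfl⟩)

variable {Φ x}

theorem inner_gramProj (hG : IsUnit (gramM Φ x).det) (j : Fin k) :
    inner ℝ (Φ (x j)) (gramProj Φ x y) = kvec Φ x y j := by
  have hGc : gramM Φ x *ᵥ ((gramM Φ x)⁻¹ *ᵥ kvec Φ x y) = kvec Φ x y := by
    rw [Matrix.mulVec_mulVec, Matrix.mul_nonsing_inv _ hG, Matrix.one_mulVec]
  rw [← congrFun hGc j]
  simp only [gramProj, inner_sum, real_inner_smul_right, Matrix.mulVec, dotProduct, gramM,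
    Matrix.of_apply, mul_comm]

theorem inner_sub_gramProj_eq_zero (hG : IsUnit (gramM Φ x).det) :
    ∀ w ∈ Submodule.span ℝ (Set.range fun i => Φ (x i)),
      inner ℝ (Φ y - gramProj Φ x y) w = (0 : ℝ) := by
  have hspan : Submodule.span ℝ (Set.range fun i => Φ (x i)) ≤
      LinearMap.ker (innerₛₗ ℝ (Φ y - gramProj Φ x y)) := by
    refine Submodule.span_le.2 (Set.range_subset_iff.2 fun j => ?_)
    rw [SetLike.mem_coe, LinearMap.mem_ker, innerₛₗ_apply_apply, real_inner_comm,
      inner_sub_right, inner_gramProj y hG, kvec, sub_self]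
  exact fun w hw => hspan hw

theorem sfun_eq_infDist_sq (hG : IsUnit (gramM Φ x).det) :
    Sfun Φ x y =
      Metric.infDist (Φ y) (Submodule.span ℝ (Set.range fun i => Φ (x i)) : Set H) ^ 2 := by
  set p := gramProj Φ x y
  have hp := gramProj_mem_span Φ x y
  have horth := inner_sub_gramProj_eq_zero y hG
  have hpy : inner ℝ p (Φ y) = kvec Φ x y ⬝ᵥ (gramM Φ x)⁻¹ *ᵥ kvec Φ x y := by
    simp only [p, gramProj, sum_inner, real_inner_smul_left, dotProduct, kvec, mul_comm]
  rw [Submodule.infDist_eq_norm_sub_of_forall_inner_eq_zero _ hp horth,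
    ← real_inner_self_eq_norm_sq]
  calc Sfun Φ x y = inner ℝ (Φ y - p) (Φ y) := by rw [inner_sub_left, hpy]; rfl
    _ = inner ℝ (Φ y - p) (Φ y - p) := by rw [inner_sub_right, horth p hp, sub_zero]

end GramProjection

section GramDeterminant

variable (Φ : E → H) (x : ℕ → E)

theorem det_gramM_succ (k : ℕ) (hG : IsUnit (gramM Φ (fun i : Fin k => x i)).det) :
    (gramM Φ (fun i : Fin (k + 1) => x i)).det =
      (gramM Φ (fun i : Fin k => x i)).det * Sfun Φ (fun i : Fin k => x i) (x k) := by
  set A := gramM Φ (fun i : Fin k => x i)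
  set v := kvec Φ (fun i : Fin k => x i) (x k)
  have hblocks : (gramM Φ (fun i : Fin (k + 1) => x i)).submatrix finSumFinEquiv finSumFinEquiv =
      Matrix.fromBlocks A (Matrix.replicateCol (Fin 1) v) (Matrix.replicateRow (Fin 1) v)
        (Matrix.of fun _ _ => inner ℝ (Φ (x k)) (Φ (x k))) := by
    ext (i | i) (j | j) <;>
      simp [A, v, gramM, kvec, Fin.val_eq_zero, real_inner_comm]
  have : Invertible A := Matrix.invertibleOfIsUnitDet A hG
  rw [← Matrix.det_submatrix_equiv_self finSumFinEquiv, hblocks, Matrix.det_fromBlocks₁₁,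
    Matrix.det_fin_one, Matrix.invOf_eq_nonsing_inv]
  congr 1
  rw [Matrix.sub_apply, ← Matrix.replicateRow_vecMul, Matrix.replicateRow_mul_replicateCol_apply,
    ← Matrix.dotProduct_mulVec]
  rfl

theorem det_gramM_eq_prod_sfun (n : ℕ)
    (hG : ∀ k < n, IsUnit (gramM Φ (fun i : Fin k => x i)).det) :
    (gramM Φ (fun i : Fin n => x i)).det =
      ∏ k ∈ Finset.range n, Sfun Φ (fun i : Fin k => x i) (x k) := by
  induction n with
  | zero => simp
  | succ n ih =>
    rw [Finset.prod_range_succ, ← ih fun k hk => hG k (hk.trans n.lt_succ_self),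
      det_gramM_succ Φ x n (hG n n.lt_succ_self)]

end GramDeterminant

section Width

variable (Ω : Set E) (Φ : E → H)

theorem kolmWidth_nonneg (n : ℕ) : 0 ≤ kolmWidth Ω Φ n :=
  Real.iInf_nonneg fun _ => Real.iSup_nonneg fun _ => Metric.infDist_nonneg

variable {Ω Φ}

theorem kolmWidth_le_of_forall_infDist_le {n : ℕ} (v : Fin n → H) {r : ℝ} (hr : 0 ≤ r)
    (h : ∀ y ∈ Ω, Metric.infDist (Φ y) (Submodule.span ℝ (Set.range v) : Set H) ≤ r) :
    kolmWidth Ω Φ n ≤ r := by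
  classical
  have hV : ∃ s : Finset H, s.card ≤ n ∧
      Submodule.span ℝ (Set.range v) = Submodule.span ℝ (s : Set H) :=
    ⟨Finset.univ.image v, Finset.card_image_le.trans (by simp), by simp⟩
  have hbdd : BddBelow (Set.range fun L : {L : Submodule ℝ H // ∃ s : Finset H,
      s.card ≤ n ∧ L = Submodule.span ℝ (s : Set H)} =>
        ⨆ y : Ω, Metric.infDist (Φ y) (L.1 : Set H)) :=
    ⟨0, Set.forall_mem_range.2 fun _ => Real.iSup_nonneg fun _ => Metric.infDist_nonneg⟩
  exact (ciInf_le hbdd ⟨_, hV⟩).trans (Real.iSup_le (fun y => h y y.2) hr)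

theorem kolmWidth_sq_le_sfun {k : ℕ} {x : Fin k → E} {z : E} (hG : IsUnit (gramM Φ x).det)
    (hmax : ∀ y ∈ Ω, Sfun Φ x y ≤ Sfun Φ x z) :
    kolmWidth Ω Φ k ^ 2 ≤ Sfun Φ x z := by
  set V := Submodule.span ℝ (Set.range fun i => Φ (x i))
  have hdist : ∀ y ∈ Ω,
      Metric.infDist (Φ y) (V : Set H) ≤ Metric.infDist (Φ z) (V : Set H) := by
    intro y hy
    have hS := hmax y hy
    rw [sfun_eq_infDist_sq y hG, sfun_eq_infDist_sq z hG] at hS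
    exact (pow_le_pow_iff_left₀ Metric.infDist_nonneg Metric.infDist_nonneg two_ne_zero).1 hS
  rw [sfun_eq_infDist_sq z hG]
  exact pow_le_pow_left₀ (kolmWidth_nonneg Ω Φ k)
    (kolmWidth_le_of_forall_infDist_le _ Metric.infDist_nonneg hdist) 2

end Width

end

theorem pow_le_prod_exp_one_mul_succ (n : ℕ) :
    (n : ℝ) ^ n ≤ ∏ k ∈ Finset.range n, Real.exp 1 * (k + 1) := by
  have hprod :
      ∏ k ∈ Finset.range n, Real.exp 1 * ((k : ℝ) + 1) = Real.exp n * n.factorial := by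
    rw [Finset.prod_mul_distrib, Finset.prod_const, Finset.card_range, ← Real.exp_nat_mul,
      mul_one, ← Finset.prod_range_add_one_eq_factorial, Nat.cast_prod]
    push_cast
    rfl
  rw [hprod, ← div_le_iff₀ (by positivity)]
  exact Real.pow_div_factorial_le_exp _ n.cast_nonneg n

theorem det_greedy_ge_general {d : ℕ} {H : Type*}
    [NormedAddCommGroup H] [InnerProductSpace ℝ H]
    (Ω : Set (EuclideanSpace ℝ (Fin d)))
    (Φ : EuclideanSpace ℝ (Fin d) → H)
    (n : ℕ) (x : ℕ → EuclideanSpace ℝ (Fin d))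
    (hmax : ∀ k, k < n → ∀ y ∈ Ω,
      Sfun Φ (fun i : Fin k => x i) y ≤ Sfun Φ (fun i : Fin k => x i) (x k))
    (hG : ∀ k, 1 ≤ k → k ≤ n → IsUnit (gramM Φ (fun i : Fin k => x i)).det) :
    ∏ k ∈ Finset.range n, (kolmWidth Ω Φ k) ^ 2 / (Real.exp 1 * (k + 1)) ≤
      Matrix.det (((1 : ℝ) / n) • gramM Φ (fun i : Fin n => x i)) := by
  set S : ℕ → ℝ := fun k => Sfun Φ (fun i : Fin k => x i) (x k)
  have hunit : ∀ k < n, IsUnit (gramM Φ (fun i : Fin k => x i)).det := by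
    intro k hk
    rcases k.eq_zero_or_pos with rfl | hpos
    · simp
    · exact hG k hpos hk.le
  have hwidth : ∀ k ∈ Finset.range n, kolmWidth Ω Φ k ^ 2 ≤ S k := fun k hk =>
    kolmWidth_sq_le_sfun (hunit k (Finset.mem_range.1 hk)) (hmax k (Finset.mem_range.1 hk))
  calc ∏ k ∈ Finset.range n, kolmWidth Ω Φ k ^ 2 / (Real.exp 1 * (k + 1))
      ≤ ∏ k ∈ Finset.range n, S k / (Real.exp 1 * (k + 1)) :=
        Finset.prod_le_prod (fun k _ => by positivity) fun k hk =>
          div_le_div_of_nonneg_right (hwidth k hk) (by positivity)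
    _ = (∏ k ∈ Finset.range n, S k) / ∏ k ∈ Finset.range n, Real.exp 1 * (k + 1) :=
        Finset.prod_div_distrib ..
    _ ≤ (∏ k ∈ Finset.range n, S k) / (n : ℝ) ^ n :=
        div_le_div_of_nonneg_left
          (Finset.prod_nonneg fun k hk => (sq_nonneg _).trans (hwidth k hk))
          (by exact_mod_cast Nat.pow_self_pos) (pow_le_prod_exp_one_mul_succ n)
    _ = Matrix.det (((1 : ℝ) / n) • gramM Φ (fun i : Fin n => x i)) := by
        rw [Matrix.det_smul, Fintype.card_fin, det_gramM_eq_prod_sfun Φ x n hunit, one_div_pow,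
          one_div_mul_eq_div]

/-- if `x 0` maximizes `K(x,x) = S_0(x)` over `Ω` and, inductively,
`x k` maximizes `S_k` (built from `x 0, …, x (k-1)`) over `Ω`, and all Gram matrices
`G_k`, `1 ≤ k ≤ n`, are invertible, then
`det((1/n) G_n) ≥ ∏_{k=1}^{n} w_K(k−1)² / (e·k)`. -/
theorem det_greedy_ge {d : ℕ} {H : Type*}
    [NormedAddCommGroup H] [InnerProductSpace ℝ H]
    (Ω : Set (EuclideanSpace ℝ (Fin d))) (hΩ : IsCompact Ω) (hne : Ω.Nonempty)
    (Φ : EuclideanSpace ℝ (Fin d) → H) (hΦ : ContinuousOn Φ Ω)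
    (n : ℕ) (hn : 1 ≤ n) (x : ℕ → EuclideanSpace ℝ (Fin d))
    (hx : ∀ k, k < n → x k ∈ Ω)
    (hmax : ∀ k, k < n → ∀ y ∈ Ω,
      Sfun Φ (fun i : Fin k => x i) y ≤ Sfun Φ (fun i : Fin k => x i) (x k))
    (hG : ∀ k, 1 ≤ k → k ≤ n → IsUnit (gramM Φ (fun i : Fin k => x i)).det) :
    ∏ k ∈ Finset.range n, (kolmWidth Ω Φ k) ^ 2 / (Real.exp 1 * (k + 1)) ≤
      Matrix.det (((1 : ℝ) / n) • gramM Φ (fun i : Fin n => x i)) :=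
  det_greedy_ge_general Ω Φ n x hmax hG

end
end

section
/- Assume w_K(n) > 0 for every n ∈ ℕ. Then there exists a sequence (x_i)_{i≥1} in Ω such that limsup_{n→∞} sup_{m≥1} [ n · λ_n((1/m)[K(x_i,x_j)]_{1≤i,j≤m}) / w_K(n)² ] ≥ 1/e, where λ_n(A) denotes the n-th largest eigenvalue (counted with multiplicity) of a real symmetric matrix A, with λ_n(A) = 0 whenever n exceeds the size of A. In particular, for the fixed domain Ω, limsup_{n→∞} sup_μ n λ_n(O_{K,μ})/w_K(n)² ≥ 1/e, where the supremum over Borel probability measures μ on Ω is realized already on empirical measures μ_m = (1/m)Σ_{i=1}^m δ_{x_i}. -/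
/-!
Pick the points greedily: `x n` maximises over `Ω` the distance of `Φ (x n)` to
`V_n = span {Φ (x i) | i < n}`. That distance is the norm of the `n`-th Gram–Schmidt vector of
`Φ (x 0), Φ (x 1), …` and is at least `w_K(n)`, so the Gram determinant of the first `M` points is
at least `∏_{k<M} w_K(k)²`. The same determinant is `M^M ∏_{k=1}^{M} λ_k` for the normalised matrix,
and `M^M ≤ e^M M!` turns this into `∏_{k<M} w_K(k+1)² ≤ ∏_{k<M} e (k+1) λ_{k+1}`. If
`n λ_n / w_K(n)²` stayed below some `c < 1/e` for all large `n` and all `m`, the right-hand side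
would be at most a constant times `(c e)^M` times the left-hand side, which fails for large `M`.
-/

open MeasureTheory Filter
open scoped ENNReal

noncomputable section

open scoped Classical in
/-- `nthEig A k` is the `(k+1)`-st largest eigenvalue (with multiplicity) of the real
symmetric matrix `A`, and `0` if `k` is at least the size of `A` (or `A` is not
symmetric). Thus `λ_n(A)` of the statement is `nthEig A (n-1)`. -/
def nthEig {m : ℕ} (A : Matrix (Fin m) (Fin m) ℝ) (k : ℕ) : ℝ :=
  if hA : A.IsHermitian then
    ((List.ofFn hA.eigenvalues).insertionSort (· ≥ ·)).getD k 0
  else 0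

theorem List.prod_range_getD_length {M : Type*} [CommMonoid M] (l : List M) (d : M) :
    ∏ k ∈ Finset.range l.length, l.getD k d = l.prod := by
  induction l with
  | nil => simp
  | cons a l ih =>
    rw [List.length_cons, Finset.prod_range_succ', List.prod_cons, mul_comm]
    simp only [List.getD_cons_succ, List.getD_cons_zero, ih]

theorem Real.pow_le_exp_one_pow_mul_factorial (m : ℕ) :
    (m : ℝ) ^ m ≤ Real.exp 1 ^ m * m.factorial := by
  have h := Real.pow_div_factorial_le_exp (m : ℝ) (Nat.cast_nonneg m) m
  rw [div_le_iff₀ (by positivity), ← Real.exp_one_pow] at h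
  exact h

open Finset in
theorem exists_le_of_prod_le_pow_mul_prod {a : ℕ → ℕ → ℝ} {b R : ℕ → ℝ} {t c : ℝ}
    (ha : ∀ M k, 0 ≤ a M k) (hb : ∀ k, 0 < b k) (haR : ∀ M k, a M k ≤ R k) (ht : 0 < t)
    (hprod : ∀ M, ∏ k ∈ range M, b k ≤ t ^ M * ∏ k ∈ range M, a M k) (hct : c * t < 1)
    (K : ℕ) : ∃ M k, K ≤ k ∧ k < M ∧ c * b k ≤ a M k := by
  by_contra! h
  have hc : 0 ≤ c := by
    by_contra! hc
    exact (h (K + 1) K le_rfl K.lt_succ_self).not_ge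
      ((mul_nonpos_of_nonpos_of_nonneg hc.le (hb K).le).trans (ha _ _))
  have hR : ∀ k, 0 ≤ R k := fun k => (ha 0 k).trans (haR 0 k)
  have hbound : ∀ n, ∏ k ∈ range K, b k ≤ (t ^ K * ∏ k ∈ range K, R k) * (c * t) ^ n := by
    intro n
    have hK : K ≤ K + n := K.le_add_right n
    have htail : ∏ k ∈ Ico K (K + n), a (K + n) k ≤ c ^ n * ∏ k ∈ Ico K (K + n), b k := by
      calc ∏ k ∈ Ico K (K + n), a (K + n) k ≤ ∏ k ∈ Ico K (K + n), c * b k :=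
            prod_le_prod (fun k _ => ha _ _) fun k hk =>
              (h _ k (mem_Ico.1 hk).1 (mem_Ico.1 hk).2).le
        _ = c ^ n * ∏ k ∈ Ico K (K + n), b k := by
            rw [prod_mul_distrib, prod_const, Nat.card_Ico, Nat.add_sub_cancel_left]
    have hhead : ∏ k ∈ range K, a (K + n) k ≤ ∏ k ∈ range K, R k :=
      prod_le_prod (fun k _ => ha _ _) fun k _ => haR _ _
    have hP : 0 < ∏ k ∈ Ico K (K + n), b k := prod_pos fun k _ => hb k
    have := hprod (K + n)
    rw [← prod_range_mul_prod_Ico _ hK, ← prod_range_mul_prod_Ico _ hK] at this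
    refine le_of_mul_le_mul_right (this.trans ?_) hP
    calc t ^ (K + n) * ((∏ k ∈ range K, a (K + n) k) * ∏ k ∈ Ico K (K + n), a (K + n) k)
        ≤ t ^ (K + n) * ((∏ k ∈ range K, R k) * (c ^ n * ∏ k ∈ Ico K (K + n), b k)) :=
          mul_le_mul_of_nonneg_left (mul_le_mul hhead htail (prod_nonneg fun k _ => ha _ _)
            (prod_nonneg fun k _ => hR k)) (pow_nonneg ht.le _)
      _ = (t ^ K * ∏ k ∈ range K, R k) * (c * t) ^ n * ∏ k ∈ Ico K (K + n), b k := by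
          ring
  have hlim : Tendsto (fun n => (t ^ K * ∏ k ∈ range K, R k) * (c * t) ^ n) atTop (nhds 0) := by
    simpa using (tendsto_pow_atTop_nhds_zero_of_lt_one (by positivity) hct).const_mul
      (t ^ K * ∏ k ∈ range K, R k)
  obtain ⟨n, hn⟩ := (hlim.eventually (gt_mem_nhds (prod_pos fun k _ => hb k))).exists
  exact (hbound n).not_gt hn

section nthEig

variable {m : ℕ} {A : Matrix (Fin m) (Fin m) ℝ}

theorem nthEig_of_isHermitian (hA : A.IsHermitian) (k : ℕ) :
    nthEig A k = ((List.ofFn hA.eigenvalues).insertionSort (· ≥ ·)).getD k 0 :=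
  dif_pos hA

theorem nthEig_mem_range_or_eq_zero (hA : A.IsHermitian) (k : ℕ) :
    nthEig A k ∈ Set.range hA.eigenvalues ∨ nthEig A k = 0 := by
  rw [nthEig_of_isHermitian hA]
  set l := (List.ofFn hA.eigenvalues).insertionSort (· ≥ ·)
  rcases lt_or_ge k l.length with hk | hk
  · left
    rw [List.getD_eq_getElem l 0 hk]
    exact List.mem_ofFn.1 ((List.perm_insertionSort _ _).subset (List.getElem_mem hk))
  · exact Or.inr (List.getD_eq_default l 0 hk)

theorem nthEig_nonneg (hA : A.PosSemidef) (k : ℕ) : 0 ≤ nthEig A k := by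
  rcases nthEig_mem_range_or_eq_zero hA.1 k with ⟨i, hi⟩ | h0
  · exact hi ▸ hA.eigenvalues_nonneg i
  · exact h0.ge

theorem nthEig_le_trace (hA : A.PosSemidef) (k : ℕ) : nthEig A k ≤ A.trace := by
  have htrace : A.trace = ∑ i, hA.1.eigenvalues i := by
    simpa using hA.1.trace_eq_sum_eigenvalues
  have hsum : 0 ≤ ∑ i, hA.1.eigenvalues i :=
    Finset.sum_nonneg fun i _ => hA.eigenvalues_nonneg i
  rw [htrace]
  rcases nthEig_mem_range_or_eq_zero hA.1 k with ⟨i, hi⟩ | h0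
  · exact hi ▸ Finset.single_le_sum (fun j _ => hA.eigenvalues_nonneg j) (Finset.mem_univ i)
  · rw [h0]
    exact hsum

theorem prod_range_nthEig (hA : A.IsHermitian) : ∏ k ∈ Finset.range m, nthEig A k = A.det := by
  set l := (List.ofFn hA.eigenvalues).insertionSort (· ≥ ·)
  have hprod := l.prod_range_getD_length 0
  rw [show l.length = m by simp [l], (List.perm_insertionSort _ _).prod_eq, List.prod_ofFn]
    at hprod
  calc ∏ k ∈ Finset.range m, nthEig A k = ∏ k ∈ Finset.range m, l.getD k 0 :=
        Finset.prod_congr rfl fun k _ => nthEig_of_isHermitian hA k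
    _ = ∏ i, hA.eigenvalues i := hprod
    _ = A.det := by simp [hA.det_eq_prod_eigenvalues]

end nthEig

section Gram

variable {H : Type*} [NormedAddCommGroup H] [InnerProductSpace ℝ H]

theorem gramM_eq_gram {E : Type*} (Φ : E → H) {m : ℕ} (x : Fin m → E) :
    gramM Φ x = Matrix.gram ℝ (fun i => Φ (x i)) :=
  rfl

theorem Matrix.trace_gram_eq_sum_norm_sq {ι : Type*} [Fintype ι] (v : ι → H) :
    (Matrix.gram ℝ v).trace = ∑ i, ‖v i‖ ^ 2 := by
  simp [Matrix.trace]

theorem Matrix.trace_one_div_smul_gram_le {m : ℕ} {v : Fin m → H} {C : ℝ} (hv : ∀ i, ‖v i‖ ≤ C) :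
    ((1 / m : ℝ) • Matrix.gram ℝ v).trace ≤ C ^ 2 := by
  rw [Matrix.trace_smul, Matrix.trace_gram_eq_sum_norm_sq, smul_eq_mul]
  rcases Nat.eq_zero_or_pos m with rfl | hm
  · simpa using sq_nonneg C
  have hsum : ∑ i, ‖v i‖ ^ 2 ≤ m * C ^ 2 := by
    simpa using Finset.sum_le_sum fun i (_ : i ∈ Finset.univ) =>
      pow_le_pow_left₀ (norm_nonneg _) (hv i) 2
  calc 1 / m * ∑ i, ‖v i‖ ^ 2 ≤ 1 / m * (m * C ^ 2) := by gcongr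
    _ = C ^ 2 := by field_simp

end Gram

section GramSchmidt

open InnerProductSpace Submodule

variable {H : Type*} [NormedAddCommGroup H] [InnerProductSpace ℝ H]
  {ι : Type*} [LinearOrder ι] [LocallyFiniteOrderBot ι] [WellFoundedLT ι] (f : ι → H)

theorem inner_gramSchmidt_self_left (i : ι) :
    inner ℝ (gramSchmidt ℝ f i) (f i) = ‖gramSchmidt ℝ f i‖ ^ 2 := by
  conv_lhs => rw [gramSchmidt_def'' ℝ f i]
  rw [inner_add_right, inner_sum, real_inner_self_eq_norm_sq, Finset.sum_eq_zero, add_zero]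
  intro j hj
  rw [inner_smul_right, gramSchmidt_orthogonal ℝ f (Finset.mem_Iio.1 hj).ne', mul_zero]

theorem gramSchmidt_expansion [Fintype ι] (hg : ∀ i, gramSchmidt ℝ f i ≠ 0) (i : ι) :
    f i = ∑ j,
      (inner ℝ (gramSchmidt ℝ f j) (f i) / ‖gramSchmidt ℝ f j‖ ^ 2) • gramSchmidt ℝ f j := by
  have hvanish : ∀ j ∉ Finset.Iic i,
      (inner ℝ (gramSchmidt ℝ f j) (f i) / ‖gramSchmidt ℝ f j‖ ^ 2) • gramSchmidt ℝ f j = 0 := by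
    intro j hj
    rw [gramSchmidt_inv_triangular ℝ f (not_le.1 (Finset.mem_Iic.not.1 hj)), zero_div, zero_smul]
  rw [← Finset.sum_subset (Finset.subset_univ _) fun j _ hj => hvanish j hj,
    ← Finset.add_sum_Iio_eq_sum_Iic, inner_gramSchmidt_self_left,
    div_self (pow_ne_zero 2 (norm_ne_zero_iff.2 (hg i))), one_smul]
  exact gramSchmidt_def'' ℝ f i

theorem det_gram_eq_prod_norm_gramSchmidt_sq [Fintype ι] [DecidableEq ι]
    (hg : ∀ i, gramSchmidt ℝ f i ≠ 0) :
    (Matrix.gram ℝ f).det = ∏ i, ‖gramSchmidt ℝ f i‖ ^ 2 := by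
  set B : Matrix ι ι ℝ :=
    Matrix.of fun i j => inner ℝ (gramSchmidt ℝ f j) (f i) / ‖gramSchmidt ℝ f j‖ ^ 2
  have hnorm : ∀ j, ‖gramSchmidt ℝ f j‖ ^ 2 ≠ 0 := fun j =>
    pow_ne_zero 2 (norm_ne_zero_iff.2 (hg j))
  have hfactor : Matrix.gram ℝ f =
      B * Matrix.diagonal (fun j => ‖gramSchmidt ℝ f j‖ ^ 2) * B.transpose := by
    ext i k
    rw [Matrix.gram_apply, Matrix.mul_apply]
    conv_lhs => rw [gramSchmidt_expansion f hg k, inner_sum]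
    refine Finset.sum_congr rfl fun j _ => ?_
    simp only [inner_smul_right, Matrix.mul_diagonal, Matrix.transpose_apply, B, Matrix.of_apply,
      real_inner_comm (f i)]
    field_simp [hnorm j]
  have hB : B.det = 1 := by
    rw [Matrix.det_of_isLowerTriangular B fun i j hij => by
      simp [B, gramSchmidt_inv_triangular ℝ f (show i < j from hij)]]
    exact Finset.prod_eq_one fun i _ => by
      simp only [B, Matrix.of_apply, inner_gramSchmidt_self_left, div_self (hnorm i)]
  rw [hfactor, Matrix.det_mul, Matrix.det_mul, Matrix.det_transpose, hB, Matrix.det_diagonal,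
    one_mul, mul_one]

theorem infDist_span_image_Iio_eq_norm_gramSchmidt (k : ι) :
    Metric.infDist (f k) (span ℝ (f '' Set.Iio k) : Set H) = ‖gramSchmidt ℝ f k‖ := by
  set K := span ℝ (f '' Set.Iio k) with hK
  have hmem : f k - gramSchmidt ℝ f k ∈ K := by
    rw [gramSchmidt_def ℝ f k, sub_sub_cancel, hK, ← span_gramSchmidt_Iio ℝ f k]
    refine sum_mem fun i hi => span_mono ?_ (starProjection_apply_mem _ _)
    exact Set.singleton_subset_iff.2 ⟨i, Finset.mem_Iio.1 hi, rfl⟩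
  have horth : ∀ w ∈ K, inner ℝ (f k - (f k - gramSchmidt ℝ f k)) w = 0 := by
    rw [sub_sub_cancel, hK, ← span_gramSchmidt_Iio ℝ f k]
    refine fun w hw => mem_orthogonal_singleton_iff_inner_right.1 (span_le.2 ?_ hw)
    rintro _ ⟨i, hi, rfl⟩
    exact mem_orthogonal_singleton_iff_inner_right.2 (gramSchmidt_orthogonal ℝ f (ne_of_gt hi))
  have := (K.norm_eq_iInf_iff_real_inner_eq_zero hmem).2 horth
  rw [sub_sub_cancel] at this
  rw [Metric.infDist_eq_iInf, this]
  simp_rw [dist_eq_norm]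

end GramSchmidt

theorem Matrix.det_le_exp_one_pow_mul_prod_nthEig {m : ℕ} {G : Matrix (Fin m) (Fin m) ℝ}
    (hG : G.PosSemidef) :
    G.det ≤ Real.exp 1 ^ m * ∏ k ∈ Finset.range m, ((k + 1) * nthEig ((1 / m : ℝ) • G) k) := by
  have hA : ((1 / m : ℝ) • G).PosSemidef := hG.smul (by positivity)
  have hscale : G.det = (m : ℝ) ^ m * ((1 / m : ℝ) • G).det := by
    rw [Matrix.det_smul, Fintype.card_fin, ← mul_assoc, ← mul_pow]
    rcases Nat.eq_zero_or_pos m with rfl | hm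
    · simp
    · rw [mul_one_div_cancel (by positivity), one_pow, one_mul]
  have hfact : ∏ k ∈ Finset.range m, ((k : ℝ) + 1) = m.factorial := by
    exact_mod_cast Finset.prod_range_add_one_eq_factorial m
  rw [Finset.prod_mul_distrib, hfact, prod_range_nthEig hA.1, hscale, ← mul_assoc]
  gcongr
  · exact hA.det_nonneg
  · exact Real.pow_le_exp_one_pow_mul_factorial m

section KolmogorovWidth

variable {E H : Type*} [NormedAddCommGroup H] [InnerProductSpace ℝ H] {Ω : Set E} {Φ : E → H}

theorem kolmWidth_bddBelow (n : ℕ) : BddBelow (Set.range fun L :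
    {L : Submodule ℝ H // ∃ s : Finset H, s.card ≤ n ∧ L = Submodule.span ℝ (s : Set H)} =>
    ⨆ x : Ω, Metric.infDist (Φ (x : E)) (L.1 : Set H)) :=
  ⟨0, by rintro _ ⟨L, rfl⟩; exact Real.iSup_nonneg fun x => Metric.infDist_nonneg⟩

instance (n : ℕ) : Nonempty
    {L : Submodule ℝ H // ∃ s : Finset H, s.card ≤ n ∧ L = Submodule.span ℝ (s : Set H)} :=
  ⟨⟨⊥, ∅, by simp, by simp⟩⟩

theorem kolmWidth_le_iSup_infDist_span_range {n : ℕ} (v : Fin n → H) :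
    kolmWidth Ω Φ n ≤
      ⨆ x : Ω, Metric.infDist (Φ (x : E)) (Submodule.span ℝ (Set.range v) : Set H) := by
  classical
  refine ciInf_le (kolmWidth_bddBelow n)
    ⟨Submodule.span ℝ (Set.range v), Finset.univ.image v, ?_, ?_⟩
  · exact Finset.card_image_le.trans (by simp)
  · rw [Finset.coe_image, Finset.coe_univ, Set.image_univ]

theorem kolmWidth_antitone : Antitone (kolmWidth Ω Φ) := by
  intro a b hab
  refine le_ciInf fun L => ?_
  obtain ⟨s, hs, hL⟩ := L.2
  exact ciInf_le (kolmWidth_bddBelow b) ⟨L.1, s, hs.trans hab, hL⟩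

end KolmogorovWidth

theorem Fin.image_Iio_eq_range {α : Type*} (g : ℕ → α) {M : ℕ} (k : Fin M) :
    (fun i : Fin M => g i) '' Set.Iio k = Set.range fun i : Fin k => g i := by
  ext z
  constructor
  · rintro ⟨j, hj, rfl⟩
    exact ⟨⟨j, hj⟩, rfl⟩
  · rintro ⟨i, rfl⟩
    exact ⟨⟨i, i.2.trans k.2⟩, Fin.lt_def.2 i.2, rfl⟩

section Greedy

open Metric

variable {E H : Type*} [TopologicalSpace E] [NormedAddCommGroup H] [InnerProductSpace ℝ H]
  {Ω : Set E} {Φ : E → H} (hΩ : IsCompact Ω) (hne : Ω.Nonempty) (hΦ : ContinuousOn Φ Ω)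

def greedySeq : ℕ → E
  | n => (hΩ.exists_isMaxOn hne ((continuous_infDist_pt
      (Submodule.span ℝ (Set.range fun i : Fin n => Φ (greedySeq i)) : Set H)).comp_continuousOn
        hΦ)).choose
  termination_by n => n
  decreasing_by all_goals exact i.2

theorem greedySeq_spec (n : ℕ) : greedySeq hΩ hne hΦ n ∈ Ω ∧
    IsMaxOn (fun y => infDist (Φ y)
      (Submodule.span ℝ (Set.range fun i : Fin n => Φ (greedySeq hΩ hne hΦ i)) : Set H))
      Ω (greedySeq hΩ hne hΦ n) := by
  rw [greedySeq]
  exact (hΩ.exists_isMaxOn hne ((continuous_infDist_pt _).comp_continuousOn hΦ)).choose_spec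

theorem kolmWidth_le_infDist_greedySeq (n : ℕ) :
    kolmWidth Ω Φ n ≤ infDist (Φ (greedySeq hΩ hne hΦ n))
      (Submodule.span ℝ (Set.range fun i : Fin n => Φ (greedySeq hΩ hne hΦ i)) : Set H) :=
  (kolmWidth_le_iSup_infDist_span_range _).trans
    (Real.iSup_le (fun y => (greedySeq_spec hΩ hne hΦ n).2 y.2) infDist_nonneg)

theorem prod_kolmWidth_sq_le_det_gramM_greedySeq (hw : ∀ n, 0 < kolmWidth Ω Φ n) (M : ℕ) :
    ∏ k ∈ Finset.range M, kolmWidth Ω Φ k ^ 2 ≤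
      (gramM Φ (fun i : Fin M => greedySeq hΩ hne hΦ i)).det := by
  set f : Fin M → H := fun i => Φ (greedySeq hΩ hne hΦ i)
  have hwidth : ∀ k : Fin M, kolmWidth Ω Φ k ≤ ‖InnerProductSpace.gramSchmidt ℝ f k‖ := by
    intro k
    rw [← infDist_span_image_Iio_eq_norm_gramSchmidt,
      Fin.image_Iio_eq_range (fun n => Φ (greedySeq hΩ hne hΦ n))]
    exact kolmWidth_le_infDist_greedySeq hΩ hne hΦ k
  have hgs : ∀ k, InnerProductSpace.gramSchmidt ℝ f k ≠ 0 := fun k =>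
    norm_pos_iff.1 ((hw k).trans_le (hwidth k))
  rw [gramM_eq_gram, det_gram_eq_prod_norm_gramSchmidt_sq _ hgs, ← Fin.prod_univ_eq_prod_range]
  exact Finset.prod_le_prod (fun k _ => sq_nonneg _)
    fun k _ => pow_le_pow_left₀ (hw k).le (hwidth k) 2

theorem prod_kolmWidth_succ_sq_le_exp_one_pow_mul_prod_nthEig (hw : ∀ n, 0 < kolmWidth Ω Φ n)
    (M : ℕ) :
    ∏ k ∈ Finset.range M, kolmWidth Ω Φ (k + 1) ^ 2 ≤ Real.exp 1 ^ M *
      ∏ k ∈ Finset.range M,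
        ((k + 1) * nthEig ((1 / M : ℝ) • gramM Φ (fun i : Fin M => greedySeq hΩ hne hΦ i)) k) :=
  calc ∏ k ∈ Finset.range M, kolmWidth Ω Φ (k + 1) ^ 2
      ≤ ∏ k ∈ Finset.range M, kolmWidth Ω Φ k ^ 2 :=
        Finset.prod_le_prod (fun _ _ => sq_nonneg _)
          fun k _ => pow_le_pow_left₀ (hw _).le (kolmWidth_antitone k.le_succ) 2
    _ ≤ (gramM Φ (fun i : Fin M => greedySeq hΩ hne hΦ i)).det :=
        prod_kolmWidth_sq_le_det_gramM_greedySeq hΩ hne hΦ hw M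
    _ ≤ _ := Matrix.det_le_exp_one_pow_mul_prod_nthEig (Matrix.posSemidef_gram ℝ _)

end Greedy

/-- assuming `w_K(n) > 0` for all `n`, there is a sequence `(x_i) ⊆ Ω` such
that `limsup_{n→∞} sup_{m≥1} n·λ_n((1/m)[K(x_i,x_j)]_{i,j≤m}) / w_K(n)² ≥ 1/e`, the
eigenvalues being those of the empirical kernel matrices (equivalently, of the integral
operators of the empirical measures `μ_m = (1/m)Σ_{i≤m} δ_{x_i}`). The limsup–sup
inequality is stated in its unfolded form: for every `ε > 0` and every `N` there are
`n ≥ max(N,1)` and `m ≥ 1` with `n λ_n / w_K(n)² ≥ 1/e − ε`. -/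
theorem exists_seq_limsup_eig_ge {d : ℕ} {H : Type*}
    [NormedAddCommGroup H] [InnerProductSpace ℝ H]
    (Ω : Set (EuclideanSpace ℝ (Fin d))) (hΩ : IsCompact Ω) (hne : Ω.Nonempty)
    (Φ : EuclideanSpace ℝ (Fin d) → H) (hΦ : ContinuousOn Φ Ω)
    (hw : ∀ n : ℕ, 0 < kolmWidth Ω Φ n) :
    ∃ x : ℕ → EuclideanSpace ℝ (Fin d), (∀ i, x i ∈ Ω) ∧
      ∀ ε : ℝ, 0 < ε → ∀ N : ℕ, ∃ n : ℕ, N ≤ n ∧ 1 ≤ n ∧ ∃ m : ℕ, 1 ≤ m ∧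
        1 / Real.exp 1 - ε ≤
          (n : ℝ) * nthEig (((1 : ℝ) / m) • gramM Φ (fun i : Fin m => x i)) (n - 1) /
            (kolmWidth Ω Φ n) ^ 2 := by
  set x := greedySeq hΩ hne hΦ
  refine ⟨x, fun i => (greedySeq_spec hΩ hne hΦ i).1, fun ε hε N => ?_⟩
  obtain ⟨C, hC⟩ := hΩ.exists_bound_of_continuousOn hΦ
  have hpsd : ∀ M : ℕ, (((1 : ℝ) / M) • gramM Φ (fun i : Fin M => x i)).PosSemidef :=
    fun M => (Matrix.posSemidef_gram ℝ _).smul (by positivity)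
  have hct : (1 / Real.exp 1 - ε) * Real.exp 1 < 1 := by
    rw [sub_mul, one_div_mul_cancel (Real.exp_pos 1).ne']
    linarith [mul_pos hε (Real.exp_pos 1)]
  obtain ⟨M, k, hNk, hkM, hle⟩ := exists_le_of_prod_le_pow_mul_prod
    (a := fun M k => (k + 1) * nthEig (((1 : ℝ) / M) • gramM Φ (fun i : Fin M => x i)) k)
    (R := fun k => (k + 1) * C ^ 2)
    (fun M k => mul_nonneg (by positivity) (nthEig_nonneg (hpsd M) k))
    (fun k => pow_pos (hw (k + 1)) 2)
    (fun M k => mul_le_mul_of_nonneg_left ((nthEig_le_trace (hpsd M) k).trans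
      (Matrix.trace_one_div_smul_gram_le fun i => hC _ (greedySeq_spec hΩ hne hΦ i).1))
      (by positivity))
    (Real.exp_pos 1) (prod_kolmWidth_succ_sq_le_exp_one_pow_mul_prod_nthEig hΩ hne hΦ hw) hct N
  refine ⟨k + 1, by omega, by omega, M, by omega, ?_⟩
  rw [Nat.add_sub_cancel, le_div_iff₀ (pow_pos (hw _) 2)]
  push_cast
  linarith
end
end
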